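/- Sufficiency of O(m^{3/2}) shortcuts: there exist a constant C > 0 and an integer m₀ such that for every integer m ≥ m₀ there is a finite set S of shortcuts with |S| ≤ C·m^{3/2} and diam(S) ≤ 2 + 1/m. -/

import Mathlib

open Real MeasureTheory

/-- Arc distance between points on the unit circle, given by their polar angles:
the length of the shorter arc between them. -/
noncomputable def arcDist (p q : ℝ) : ℝ := ⨅ n : ℤ, |p - q + 2 * π * n|

/-- Euclidean length of the chord between the circle points with angles `u` and `v`. -/
noncomputable def chordLen (u v : ℝ) : ℝ := 2 * Real.sin (arcDist u v / 2)

/-- A pair of angles is a genuine shortcut (chord) if its endpoints are distinct points. -/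
def IsShortcut (s : ℝ × ℝ) : Prop := arcDist s.1 s.2 ≠ 0

/-- δ(a) = arcsin(a/2) - a/2. -/
noncomputable def sdelta (a : ℝ) : ℝ := Real.arcsin (a / 2) - a / 2

/-- Cost of a path that starts at `p`, fully traverses the listed chords in order
(travelling along the circle in between), and ends at `q`. -/
noncomputable def walkCost (q : ℝ) : ℝ → List (ℝ × ℝ) → ℝ
  | p, [] => arcDist p q
  | p, e :: L => arcDist p e.1 + chordLen e.1 e.2 + walkCost q e.2 L

/-- Shortest-path distance from `p` to `q` using the shortcuts of `S`
(each usable in either orientation, and always traversed completely). -/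
noncomputable def dS (S : Finset (ℝ × ℝ)) (p q : ℝ) : ℝ :=
  sInf {c | ∃ L : List (ℝ × ℝ), (∀ e ∈ L, e ∈ S ∨ (e.2, e.1) ∈ S) ∧ c = walkCost q p L}

/-- Diameter of the circle augmented with the shortcuts of `S`. -/
noncomputable def diamS (S : Finset (ℝ × ℝ)) : ℝ :=
  sSup {d | ∃ p q : ℝ, d = dS S p q}

/-- diam(k): the optimal diameter achievable with `k` shortcuts. -/
noncomputable def diamK (k : ℕ) : ℝ :=
  sInf {d | ∃ S : Finset (ℝ × ℝ), S.card = k ∧ (∀ s ∈ S, IsShortcut s) ∧ d = diamS S}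

/-- Distance from `p` to `q` when a single shortcut with endpoints `u`, `v` is available. -/
noncomputable def dOne (u v p q : ℝ) : ℝ :=
  min (arcDist p q)
    (min (arcDist p u + chordLen u v + arcDist v q)
      (arcDist p v + chordLen u v + arcDist u q))

/-- Two angles represent the same point of the circle. -/
def SamePoint (p q : ℝ) : Prop := arcDist p q = 0

/-- Two pairs of angles represent the same chord of the circle. -/
def SameChord (s t : ℝ × ℝ) : Prop :=
  (SamePoint s.1 t.1 ∧ SamePoint s.2 t.2) ∨ (SamePoint s.1 t.2 ∧ SamePoint s.2 t.1)

/-- `p` lies in the deep umbra of the shortcut from `u` to `u + β`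
(where `0 < β ≤ π` is the counterclockwise arc spanned by the shortcut):
`p` lies in the inner umbra, and `|p u'| + |s| ≥ d(p, v')` where `u'` is the
endpoint closer to `p` and `v'` the other one. -/
def InDeepUmbra (u β p : ℝ) : Prop :=
  (∃ t : ℝ, sdelta (chordLen u (u + β)) ≤ t ∧ t ≤ β - sdelta (chordLen u (u + β)) ∧
    arcDist p (u + t) = 0) ∧
  (arcDist p u ≤ arcDist p (u + β) →
    arcDist p (u + β) ≤ chordLen p u + chordLen u (u + β)) ∧
  (arcDist p (u + β) ≤ arcDist p u →
    arcDist p u ≤ chordLen p (u + β) + chordLen u (u + β))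

/-- `d` equals δ*_k : for `k ∈ {3,4,5}` this is `δ(a*_k)` where `a*_k + δ(a*_k) = (k-1)π/k`,
and for `k = 6` it is `δ(2) = π/2 - 1`. -/
def dstarSpec (k : ℕ) (d : ℝ) : Prop :=
  (k = 6 ∧ d = sdelta 2) ∨
    (∃ a, a ∈ Set.Icc (0 : ℝ) 2 ∧ a + sdelta a = ((k : ℝ) - 1) * π / k ∧ d = sdelta a)

/-!
A single chord suffices to shortcut any arc of length `a ∈ (2 + ε, π]`. The chord of arc `π - x`
has length `2 cos (x / 2) ≤ 2 - x² / π²` (Jordan). Take `x` on the grid `(ε / 2) ℕ` within `ε / 2`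
above the deficit `π - a`, and a copy of the chord starting at most `g = ε / 4 + x² / 32` past the
source: the path costs at most `2 g + (2 - x² / π²) + ε / 2 ≤ 2 + ε`, since `π² ≤ 16`.
Rotating each of the `O(1 / ε)` chord lengths in steps of `g` costs `2π / g` chords; for the `j`-th
grid point this is `O(1 / ε)` when `j ≤ ε^{-1/2}` and `O(1 / (ε j)²)` beyond, so with `ε = 1 / m`
there are `O(m^{3/2})` chords in all.
-/

lemma arcDist_nonneg (p q : ℝ) : 0 ≤ arcDist p q :=
  le_ciInf fun _ => abs_nonneg _

lemma arcDist_le_abs_add (p q : ℝ) (n : ℤ) : arcDist p q ≤ |p - q + 2 * π * n| :=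
  ciInf_le ⟨0, by rintro _ ⟨n, rfl⟩; positivity⟩ n

lemma arcDist_le_abs_sub (p q : ℝ) : arcDist p q ≤ |p - q| := by
  simpa using arcDist_le_abs_add p q 0

lemma arcDist_comm (p q : ℝ) : arcDist p q = arcDist q p := by
  have key (a b : ℝ) : arcDist a b ≤ arcDist b a :=
    le_ciInf fun n => (arcDist_le_abs_add a b (-n)).trans_eq <| by
      rw [← abs_neg]; push_cast; ring_nf
  exact (key p q).antisymm (key q p)

lemma arcDist_add_two_pi_mul (p q : ℝ) (k : ℤ) : arcDist p (q + 2 * π * k) = arcDist p q := by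
  have key (a b : ℝ) (j : ℤ) : arcDist a (b + 2 * π * j) ≤ arcDist a b :=
    le_ciInf fun n => (arcDist_le_abs_add _ _ (n + j)).trans_eq <| by push_cast; ring_nf
  refine (key p q k).antisymm ?_
  simpa using key p (q + 2 * π * k) (-k)

lemma add_two_pi_mul_arcDist (p q : ℝ) (k : ℤ) : arcDist (p + 2 * π * k) q = arcDist p q := by
  rw [arcDist_comm, arcDist_add_two_pi_mul, arcDist_comm]

lemma arcDist_eq_abs_sub {p q : ℝ} (h : |p - q| ≤ π) : arcDist p q = |p - q| := by
  refine (arcDist_le_abs_sub p q).antisymm (le_ciInf fun n => ?_)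
  rcases lt_trichotomy n 0 with hn | rfl | hn
  · have : (n : ℝ) ≤ -1 := by exact_mod_cast Int.le_sub_one_of_lt hn
    nlinarith [abs_le.mp h, neg_le_abs (p - q + 2 * π * n), pi_pos]
  · simp
  · have : (1 : ℝ) ≤ n := by exact_mod_cast hn
    nlinarith [abs_le.mp h, le_abs_self (p - q + 2 * π * n), pi_pos]

lemma arcDist_self_add {u β : ℝ} (h₀ : 0 ≤ β) (h : β ≤ π) : arcDist u (u + β) = β := by
  have hβ : |u - (u + β)| = β := by rw [sub_add_cancel_left, abs_neg, abs_of_nonneg h₀]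
  rw [arcDist_eq_abs_sub (hβ.trans_le h), hβ]

lemma exists_abs_sub_add_two_pi_mul_le (p q : ℝ) : ∃ k : ℤ, |p - (q + 2 * π * k)| ≤ π := by
  have hq := toIocMod_mem_Ioc two_pi_pos (p - π) q
  refine ⟨-toIocDiv two_pi_pos (p - π) q, abs_le.mpr ⟨?_, ?_⟩⟩ <;>
  · have := self_sub_toIocMod_eq_mul two_pi_pos (p - π) q
    push_cast
    linarith [hq.1, hq.2]

lemma arcDist_le_pi (p q : ℝ) : arcDist p q ≤ π := by
  obtain ⟨k, hk⟩ := exists_abs_sub_add_two_pi_mul_le p q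
  exact (arcDist_add_two_pi_mul p q k).symm.trans_le ((arcDist_le_abs_sub _ _).trans hk)

/-- Up to a full turn, `q` lies at distance `arcDist p q` from `p` in one of the two directions. -/
lemma exists_add_two_pi_mul_eq (p q : ℝ) :
    ∃ k : ℤ, q + 2 * π * k = p + arcDist p q ∨ p + 2 * π * k = q + arcDist p q := by
  obtain ⟨k, hk⟩ := exists_abs_sub_add_two_pi_mul_le p q
  rw [← arcDist_add_two_pi_mul p q k, arcDist_eq_abs_sub hk]
  rcases le_total p (q + 2 * π * k) with h | h
  · exact ⟨k, Or.inl (by rw [abs_sub_comm, abs_of_nonneg (sub_nonneg.mpr h)]; ring)⟩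
  · refine ⟨-k, Or.inr ?_⟩
    rw [abs_of_nonneg (sub_nonneg.mpr h)]; push_cast; ring

lemma chordLen_nonneg (u v : ℝ) : 0 ≤ chordLen u v :=
  mul_nonneg zero_le_two <| sin_nonneg_of_nonneg_of_le_pi (by linarith [arcDist_nonneg u v])
    (by linarith [arcDist_le_pi u v, pi_pos])

lemma chordLen_comm (u v : ℝ) : chordLen u v = chordLen v u := by
  rw [chordLen, chordLen, arcDist_comm]

/-- Jordan-type bound: a chord whose arc falls short of a half-turn by `x` saves `x² / π²`. -/
lemma chordLen_self_add_pi_sub_le {x : ℝ} (u : ℝ) (h₀ : 0 ≤ x) (h : x ≤ π) :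
    chordLen u (u + (π - x)) ≤ 2 - x ^ 2 / π ^ 2 := by
  rw [chordLen, arcDist_self_add (by linarith) (by linarith), sub_div, sin_pi_div_two_sub]
  have := cos_le_one_sub_mul_cos_sq (x := x / 2) (by rw [abs_of_nonneg (by positivity)]; linarith)
  have hπ := pi_pos
  field_simp at this ⊢
  linarith

lemma walkCost_nonneg (q p : ℝ) (L : List (ℝ × ℝ)) : 0 ≤ walkCost q p L := by
  induction L generalizing p with
  | nil => exact arcDist_nonneg p q
  | cons e L ih =>
    have := arcDist_nonneg p e.1
    have := chordLen_nonneg e.1 e.2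
    have := ih e.2
    simp only [walkCost]
    linarith

section Paths

variable {S : Finset (ℝ × ℝ)}

lemma dS_le_walkCost (p q : ℝ) {L : List (ℝ × ℝ)} (hL : ∀ e ∈ L, e ∈ S ∨ (e.2, e.1) ∈ S) :
    dS S p q ≤ walkCost q p L :=
  csInf_le ⟨0, by rintro _ ⟨L', _, rfl⟩; exact walkCost_nonneg q p L'⟩ ⟨L, hL, rfl⟩

lemma dS_le_arcDist (p q : ℝ) : dS S p q ≤ arcDist p q :=
  dS_le_walkCost p q (L := []) (by simp)

lemma dS_le_of_mem {e : ℝ × ℝ} (he : e ∈ S) (p q : ℝ) :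
    dS S p q ≤ arcDist p e.1 + chordLen e.1 e.2 + arcDist e.2 q :=
  dS_le_walkCost p q (L := [e]) (by simp [he])

lemma dS_le_of_mem_swap {e : ℝ × ℝ} (he : e ∈ S) (p q : ℝ) :
    dS S p q ≤ arcDist q e.1 + chordLen e.1 e.2 + arcDist e.2 p := by
  have := dS_le_walkCost (S := S) p q (L := [(e.2, e.1)]) (by simp [he])
  simp only [walkCost] at this
  rw [arcDist_comm q, arcDist_comm e.2, chordLen_comm]
  linarith

/-- To bound the diameter by `c`, it suffices to shortcut every arc longer than `c`
by a path through a single chord. -/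
lemma diamS_le_of_forall_arc {c : ℝ} (hc : 0 ≤ c)
    (h : ∀ p a, c < a → a ≤ π →
      ∃ e ∈ S, arcDist p e.1 + chordLen e.1 e.2 + arcDist e.2 (p + a) ≤ c) :
    diamS S ≤ c := by
  refine Real.sSup_le ?_ hc
  rintro _ ⟨p, q, rfl⟩
  rcases le_or_gt (arcDist p q) c with hpq | hpq
  · exact (dS_le_arcDist p q).trans hpq
  obtain ⟨k, hk | hk⟩ := exists_add_two_pi_mul_eq p q
  · obtain ⟨e, he, hcost⟩ := h p _ hpq (arcDist_le_pi p q)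
    rw [← hk, arcDist_add_two_pi_mul] at hcost
    exact (dS_le_of_mem he p q).trans hcost
  · obtain ⟨e, he, hcost⟩ := h q _ hpq (arcDist_le_pi p q)
    rw [← hk, arcDist_add_two_pi_mul] at hcost
    exact (dS_le_of_mem_swap he p q).trans hcost

end Paths

lemma le_natCeil_div_mul {x h : ℝ} (hx : 0 ≤ x) (hh : 0 < h) :
    x ≤ ⌈x / h⌉₊ * h ∧ ⌈x / h⌉₊ * h < x + h := by
  refine ⟨(div_le_iff₀ hh).mp (Nat.le_ceil _), ?_⟩
  have := mul_lt_mul_of_pos_right (Nat.ceil_lt_add_one (div_nonneg hx hh.le)) hh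
  rwa [add_mul, div_mul_cancel₀ _ hh.ne', one_mul] at this

/-- Chords spanning the counterclockwise arc `β`, started at `0, g, 2g, …` once around the circle. -/
noncomputable def spacedChords (g β : ℝ) : Finset (ℝ × ℝ) :=
  (Finset.range (⌈2 * π / g⌉₊ + 1)).image fun i : ℕ => ((i : ℝ) * g, i * g + β)

lemma card_spacedChords_le {g : ℝ} (hg : 0 < g) (β : ℝ) :
    ((spacedChords g β).card : ℝ) ≤ 2 * π / g + 2 := by
  have hcard : (spacedChords g β).card ≤ ⌈2 * π / g⌉₊ + 1 :=
    Finset.card_image_le.trans (Finset.card_range _).le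
  have := Nat.ceil_lt_add_one (by positivity : 0 ≤ 2 * π / g)
  have : ((spacedChords g β).card : ℝ) ≤ ⌈2 * π / g⌉₊ + 1 := by exact_mod_cast hcard
  linarith

lemma exists_mem_spacedChords {g : ℝ} (hg : 0 < g) (β p : ℝ) :
    ∃ u, (u, u + β) ∈ spacedChords g β ∧ ∃ k : ℤ, p + 2 * π * k ≤ u ∧ u ≤ p + 2 * π * k + g := by
  set p₀ := toIcoMod two_pi_pos 0 p
  have hp₀ := toIcoMod_mem_Ico' two_pi_pos p
  obtain ⟨hle, hlt⟩ := le_natCeil_div_mul hp₀.1 hg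
  refine ⟨⌈p₀ / g⌉₊ * g, Finset.mem_image.mpr ⟨⌈p₀ / g⌉₊, ?_, rfl⟩,
    -toIcoDiv two_pi_pos 0 p, ?_⟩
  · exact Finset.mem_range.mpr <| Nat.lt_succ_of_le <| Nat.ceil_mono <|
      div_le_div_of_nonneg_right hp₀.2.le hg.le
  · have := toIcoMod_add_toIcoDiv_mul two_pi_pos 0 p
    push_cast
    constructor <;> linarith

/-- One chord of arc `π - x`, entered `u - p` after `p`, reaches the point at arc `π - y`
beyond `p`. -/
lemma path_through_chord_le {p u x y : ℝ} (hpu : p ≤ u) (hx₀ : 0 ≤ x) (hx : x ≤ π) (hyx : y ≤ x) :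
    arcDist p u + chordLen u (u + (π - x)) + arcDist (u + (π - x)) (p + (π - y)) ≤
      2 * (u - p) + (x - y) + 2 - x ^ 2 / π ^ 2 := by
  have h₁ : arcDist p u ≤ u - p := by
    rw [← abs_of_nonneg (sub_nonneg.mpr hpu), abs_sub_comm]
    exact arcDist_le_abs_sub p u
  have h₃ : arcDist (u + (π - x)) (p + (π - y)) ≤ u - p + (x - y) :=
    (arcDist_le_abs_sub _ _).trans <| abs_le.mpr ⟨by linarith, by linarith⟩
  linarith [chordLen_self_add_pi_sub_le u hx₀ hx]

noncomputable def chordSpacing (ε x : ℝ) : ℝ := ε / 4 + x ^ 2 / 32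

/-- Chords of arc `π - x` for `x` on the grid `(ε / 2) ℕ` up to `π - 2`, spaced by
`chordSpacing ε x`. Entering such a chord costs a detour of at most `2 * chordSpacing ε x =
ε / 2 + x² / 16`, paid for by the saving `x² / π²` of the chord and the slack `ε / 2` left by the
grid. -/
noncomputable def shortcutSet (ε : ℝ) : Finset (ℝ × ℝ) :=
  (Finset.range (⌈(π - 2) / (ε / 2)⌉₊ + 1)).biUnion fun j =>
    spacedChords (chordSpacing ε (j * (ε / 2))) (π - j * (ε / 2))

lemma exists_mem_shortcutSet_path_le {ε : ℝ} (hε : 0 < ε) (p : ℝ) {a : ℝ} (ha : 2 + ε < a)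
    (haπ : a ≤ π) :
    ∃ e ∈ shortcutSet ε, arcDist p e.1 + chordLen e.1 e.2 + arcDist e.2 (p + a) ≤ 2 + ε := by
  have hy : 0 ≤ π - a := by linarith
  obtain ⟨hyx, hxy⟩ := le_natCeil_div_mul hy (half_pos hε)
  set j := ⌈(π - a) / (ε / 2)⌉₊
  set x := (j : ℝ) * (ε / 2)
  have hj : j < ⌈(π - 2) / (ε / 2)⌉₊ + 1 :=
    Nat.lt_succ_of_le <| Nat.ceil_mono <| div_le_div_of_nonneg_right (by linarith) (by linarith)
  obtain ⟨u, hu, k, hpu, hup⟩ :=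
    exists_mem_spacedChords (g := chordSpacing ε x) (by unfold chordSpacing; positivity) (π - x) p
  refine ⟨_, Finset.mem_biUnion.mpr ⟨j, Finset.mem_range.mpr hj, hu⟩, ?_⟩
  have hpath := path_through_chord_le (y := π - a) hpu (by positivity) (by linarith) hyx
  rw [add_two_pi_mul_arcDist, show p + 2 * π * k + (π - (π - a)) = p + a + 2 * π * k by ring,
    arcDist_add_two_pi_mul] at hpath
  have hsaving : x ^ 2 / 16 ≤ x ^ 2 / π ^ 2 :=
    div_le_div_of_nonneg_left (sq_nonneg x) (by positivity) (by nlinarith [pi_lt_four, pi_pos])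
  unfold chordSpacing at hup
  linarith

lemma isShortcut_of_mem_shortcutSet {ε : ℝ} (hε : 0 < ε) (hε₄ : ε ≤ 4) {e : ℝ × ℝ}
    (he : e ∈ shortcutSet ε) : IsShortcut e := by
  obtain ⟨j, hj, he⟩ := Finset.mem_biUnion.mp he
  obtain ⟨i, -, rfl⟩ := Finset.mem_image.mp he
  have hjε : (j : ℝ) * (ε / 2) < π := by
    have hj' : (j : ℝ) < (π - 2) / (ε / 2) + 1 :=
      (Nat.cast_le.mpr (Nat.lt_succ_iff.mp (Finset.mem_range.mp hj))).trans_lt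
        (Nat.ceil_lt_add_one (div_nonneg (by linarith [pi_gt_three]) (by positivity)))
    have := mul_lt_mul_of_pos_right hj' (half_pos hε)
    rw [add_mul, div_mul_cancel₀ _ (half_pos hε).ne'] at this
    linarith
  unfold IsShortcut
  rw [arcDist_self_add (by linarith) (by linarith [show 0 ≤ (j : ℝ) * (ε / 2) by positivity])]
  linarith

lemma sum_range_inv_add_mul_sq_le {a b : ℝ} (ha : 0 < a) (hb : 0 < b) (n K : ℕ) :
    ∑ j ∈ Finset.range n, (a + b * j ^ 2)⁻¹ ≤ (K + 1) / a + 2 / (b * (K + 1)) := by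
  have hsplit : Finset.range n ⊆ Finset.range (K + 1) ∪ Finset.Ioo K n := by
    intro j hj
    simp only [Finset.mem_range, Finset.mem_union, Finset.mem_Ioo] at hj ⊢
    omega
  have hdisj : Disjoint (Finset.range (K + 1)) (Finset.Ioo K n) := by
    rw [Finset.disjoint_left]
    intro j hj hj'
    simp only [Finset.mem_range, Finset.mem_Ioo] at hj hj'
    omega
  have hhead : ∀ j ∈ Finset.range (K + 1), (a + b * j ^ 2)⁻¹ ≤ a⁻¹ := fun j _ =>
    inv_anti₀ ha (by nlinarith [sq_nonneg (j : ℝ)])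
  have htail : ∀ j ∈ Finset.Ioo K n, (a + b * j ^ 2)⁻¹ ≤ b⁻¹ * ((j : ℝ) ^ 2)⁻¹ := by
    intro j hj
    have : (0 : ℝ) < j := by exact_mod_cast (Nat.zero_le K).trans_lt (Finset.mem_Ioo.mp hj).1
    rw [← mul_inv]
    exact inv_anti₀ (by positivity) (by linarith)
  calc ∑ j ∈ Finset.range n, (a + b * j ^ 2)⁻¹
      ≤ ∑ j ∈ Finset.range (K + 1) ∪ Finset.Ioo K n, (a + b * j ^ 2)⁻¹ :=
        Finset.sum_le_sum_of_subset_of_nonneg hsplit fun _ _ _ => by positivity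
    _ ≤ ∑ _j ∈ Finset.range (K + 1), a⁻¹ + ∑ j ∈ Finset.Ioo K n, b⁻¹ * ((j : ℝ) ^ 2)⁻¹ := by
        rw [Finset.sum_union hdisj]
        exact add_le_add (Finset.sum_le_sum hhead) (Finset.sum_le_sum htail)
    _ ≤ (K + 1) * a⁻¹ + b⁻¹ * (2 / (K + 1)) := by
        rw [Finset.sum_const, Finset.card_range, nsmul_eq_mul, ← Finset.mul_sum]
        push_cast
        gcongr
        exact sum_Ioo_inv_sq_le K n
    _ = (K + 1) / a + 2 / (b * (K + 1)) := by field_simp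

lemma card_shortcutSet_le {ε : ℝ} (hε : 0 < ε) (K : ℕ) :
    ((shortcutSet ε).card : ℝ) ≤
      2 * π * (4 * (K + 1) / ε + 256 / (ε ^ 2 * (K + 1))) + 2 * ((π - 2) / (ε / 2) + 2) := by
  set J := ⌈(π - 2) / (ε / 2)⌉₊
  have hspacing : ∀ j : ℕ, chordSpacing ε (j * (ε / 2)) = ε / 4 + ε ^ 2 / 128 * j ^ 2 := by
    intro j; unfold chordSpacing; ring
  have hJ : (J : ℝ) < (π - 2) / (ε / 2) + 1 :=
    Nat.ceil_lt_add_one (div_nonneg (by linarith [pi_gt_three]) (by positivity))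
  calc ((shortcutSet ε).card : ℝ)
      ≤ ∑ j ∈ Finset.range (J + 1), (2 * π / (ε / 4 + ε ^ 2 / 128 * j ^ 2) + 2) := by
        refine (Nat.cast_le.mpr Finset.card_biUnion_le).trans ?_
        push_cast
        refine Finset.sum_le_sum fun j _ => ?_
        rw [← hspacing]
        exact card_spacedChords_le (by rw [hspacing]; positivity) _
    _ = 2 * π * ∑ j ∈ Finset.range (J + 1), (ε / 4 + ε ^ 2 / 128 * j ^ 2)⁻¹ + 2 * (J + 1) := by
        rw [Finset.sum_add_distrib, Finset.mul_sum]
        simp only [div_eq_mul_inv, Finset.sum_const, Finset.card_range, nsmul_eq_mul]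
        push_cast
        ring
    _ ≤ 2 * π * ((K + 1) / (ε / 4) + 2 / (ε ^ 2 / 128 * (K + 1))) +
          2 * ((π - 2) / (ε / 2) + 2) := by
        have := sum_range_inv_add_mul_sq_le (a := ε / 4) (b := ε ^ 2 / 128) (by positivity)
          (by positivity) (J + 1) K
        exact add_le_add (mul_le_mul_of_nonneg_left this (by positivity)) (by linarith)
    _ = _ := by field_simp; ring

lemma card_shortcutSet_inv_le {m : ℕ} (hm : 1 ≤ m) :
    ((shortcutSet (m : ℝ)⁻¹).card : ℝ) ≤ 2000 * (m : ℝ) ^ ((3 : ℝ) / 2) := by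
  have hm₀ : (0 : ℝ) < m := by exact_mod_cast hm
  set σ := √(m : ℝ)
  have hσ₁ : 1 ≤ σ := Real.one_le_sqrt.mpr (by exact_mod_cast hm)
  have hσm : σ ^ 2 = m := Real.sq_sqrt hm₀.le
  have hpow : (m : ℝ) ^ ((3 : ℝ) / 2) = σ ^ 3 := by
    rw [show (3 : ℝ) / 2 = 1 + 1 / 2 by norm_num, Real.rpow_add hm₀, Real.rpow_one,
      ← Real.sqrt_eq_rpow]
    linear_combination (-σ) * hσm
  have hK₁ : σ ≤ Nat.sqrt m + 1 := Real.real_sqrt_le_nat_sqrt_succ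
  have hK₂ : (Nat.sqrt m : ℝ) + 1 ≤ 2 * σ := by linarith [Real.nat_sqrt_le_real_sqrt (a := m)]
  have hbound := card_shortcutSet_le (inv_pos.mpr hm₀) (Nat.sqrt m)
  have hhead : 4 * (Nat.sqrt m + 1) / (m : ℝ)⁻¹ ≤ 8 * σ ^ 3 := by
    rw [div_inv_eq_mul, ← hσm]; nlinarith
  have htail : 256 / ((m : ℝ)⁻¹ ^ 2 * (Nat.sqrt m + 1)) ≤ 256 * σ ^ 3 := by
    rw [div_le_iff₀ (by positivity), inv_pow, ← hσm]
    field_simp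
    nlinarith
  have hgrid : 2 * ((π - 2) / ((m : ℝ)⁻¹ / 2) + 2) ≤ 9 * σ ^ 3 := by
    rw [div_div_eq_mul_div, div_inv_eq_mul, ← hσm]
    nlinarith [mul_le_mul_of_nonneg_right (by linarith [pi_lt_d2] : π - 2 ≤ 1.15) (sq_nonneg σ),
      pow_le_pow_right₀ hσ₁ (by norm_num : 2 ≤ 3),
      one_le_pow₀ (n := 3) hσ₁]
  rw [hpow]
  nlinarith [pi_lt_d2, pi_pos]

/-- `O(m^{3/2})` shortcuts suffice for diameter `2 + 1/m`. -/
theorem stmt7 :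
    ∃ C : ℝ, 0 < C ∧ ∃ m₀ : ℕ, ∀ m : ℕ, m₀ ≤ m →
      ∃ S : Finset (ℝ × ℝ), (∀ s ∈ S, IsShortcut s) ∧
        (S.card : ℝ) ≤ C * (m : ℝ) ^ ((3 : ℝ) / 2) ∧
        diamS S ≤ 2 + 1 / (m : ℝ) := by
  refine ⟨2000, by norm_num, 1, fun m hm => ?_⟩
  have hε : (0 : ℝ) < (m : ℝ)⁻¹ := inv_pos.mpr (by exact_mod_cast hm)
  refine ⟨shortcutSet (m : ℝ)⁻¹, ?_, card_shortcutSet_inv_le hm, ?_⟩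
  · exact fun s hs => isShortcut_of_mem_shortcutSet hε
      (inv_le_one_of_one_le₀ (by exact_mod_cast hm) |>.trans (by norm_num)) hs
  · rw [one_div]
    exact diamS_le_of_forall_arc (by positivity) fun p a ha haπ =>
      exists_mem_shortcutSet_path_le hε p ha haπ
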